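/- For n >= 7, there is no perfect 2-coloring T of GP(n,3) with parameter matrix [[1,2],[2,1]] such that for some index i, T(a_i) = T(b_i) = T(a_{i+2}) = 1 and T(a_{i+1}) = T(b_{i+1}) = T(b_{i+2}) = 2. -/

import Mathlib

/-- The generalized Petersen graph `GP n k`. Vertices are pairs `(s, i)` with
`s : Bool` (`false` = outer vertex `aᵢ`, `true` = inner vertex `bᵢ`) and `i : ZMod n`.
Edges: `aᵢ aᵢ₊₁`, `aᵢ bᵢ`, `bᵢ bᵢ₊ₖ`. -/
def GP (n k : ℕ) : SimpleGraph (Bool × ZMod n) :=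
  SimpleGraph.fromRel (fun v w =>
    (v.1 = false ∧ w.1 = false ∧ w.2 = v.2 + 1) ∨
    (v.1 = false ∧ w.1 = true ∧ w.2 = v.2) ∨
    (v.1 = true ∧ w.1 = true ∧ w.2 = v.2 + (k : ZMod n)))

/-- `T` is a perfect 2-coloring of `G` with parameter matrix `A`:
`T` is surjective onto the two colors (color `0` = white = "1", color `1` = black = "2"),
and every vertex of color `i` has exactly `A i j` neighbors of color `j`. -/
def IsPerfectColoring {V : Type*} (G : SimpleGraph V) (T : V → Fin 2)
    (A : Matrix (Fin 2) (Fin 2) ℕ) : Prop :=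
  Function.Surjective T ∧
  ∀ v : V, ∀ j : Fin 2, {w | G.Adj v w ∧ T w = j}.ncard = A (T v) j

/-! In a perfect colouring of a cubic graph with matrix `!![1, 2; 2, 1]` every closed
neighbourhood holds exactly two vertices of each colour, so the colour values (`0`/`1`) sum to `2`
over it. Writing `aₖ, bₖ` for the colours of `a_{i+k}, b_{i+k}`, these sums at `a₂, b₃, a₄, b₄, a₆`
force `a₃ = 0`, `b₆ = 1`, `a₅ = 1`, `b₇ = 0` and `a₆ = a₇ = 0`, leaving no room for the sum at
`a₇`. -/

lemma IsPerfectColoring.sum_val_neighbors {V : Type*} {G : SimpleGraph V} {T : V → Fin 2}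
    {A : Matrix (Fin 2) (Fin 2) ℕ} (hT : IsPerfectColoring G T A) {v : V} {s : Finset V}
    (hs : ∀ w, G.Adj v w ↔ w ∈ s) : ∑ w ∈ s, (T w : ℕ) = A (T v) 1 := by
  classical
  have hset : {w | G.Adj v w ∧ T w = 1} = ↑(s.filter (T · = 1)) := by
    ext w
    simp [hs]
  rw [← hT.2 v 1, hset, Set.ncard_coe_finset, Finset.card_filter]
  refine Finset.sum_congr rfl fun w _ => ?_
  split_ifs <;> omega

lemma IsPerfectColoring.sum_val_closedNbhd {V : Type*} {G : SimpleGraph V} {T : V → Fin 2}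
    (hT : IsPerfectColoring G T !![1, 2; 2, 1]) {v : V} {s : Finset V}
    (hs : ∀ w, G.Adj v w ↔ w ∈ s) : (T v : ℕ) + ∑ w ∈ s, (T w : ℕ) = 2 := by
  rw [hT.sum_val_neighbors hs]
  generalize T v = c
  fin_cases c <;> rfl

lemma ne_and_eq_add_or_eq_add_iff {G : Type*} [AddCommGroup G] {a : G} (ha : a ≠ 0) (j m : G) :
    (¬j = m ∧ (m = j + a ∨ j = m + a)) ↔ m = j - a ∨ m = j + a := by
  grind

lemma ZMod.natCast_ne_zero_of_lt {n m : ℕ} (hm : 0 < m) (h : m < n) : (m : ZMod n) ≠ 0 := by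
  rw [ne_eq, ZMod.natCast_eq_zero_iff]
  exact Nat.not_dvd_of_pos_of_lt hm h

namespace GP

variable {n k : ℕ}

lemma adj_outer_iff (h : (1 : ZMod n) ≠ 0) (j : ZMod n) (w : Bool × ZMod n) :
    (GP n k).Adj (false, j) w ↔ w ∈ ({(false, j - 1), (false, j + 1), (true, j)} : Finset _) := by
  obtain ⟨_ | _, m⟩ := w
  · simpa [GP] using ne_and_eq_add_or_eq_add_iff h j m
  · simp [GP]

lemma adj_inner_iff (h : (k : ZMod n) ≠ 0) (j : ZMod n) (w : Bool × ZMod n) :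
    (GP n k).Adj (true, j) w ↔ w ∈ ({(true, j - k), (true, j + k), (false, j)} : Finset _) := by
  obtain ⟨_ | _, m⟩ := w
  · simpa [GP] using eq_comm
  · simpa [GP] using ne_and_eq_add_or_eq_add_iff h j m

variable {T : Bool × ZMod n → Fin 2}

lemma sum_val_closedNbhd_outer (hT : IsPerfectColoring (GP n k) T !![1, 2; 2, 1])
    (h2 : (2 : ZMod n) ≠ 0) (j : ZMod n) :
    (T (false, j) : ℕ) + T (false, j - 1) + T (false, j + 1) + T (true, j) = 2 := by
  have h1 : (1 : ZMod n) ≠ 0 := fun h => h2 (by rw [← one_add_one_eq_two, h, add_zero])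
  have hsum := hT.sum_val_closedNbhd (adj_outer_iff h1 j)
  rw [Finset.sum_insert (by simpa using fun h : j - 1 = j + 1 => h2 (by linear_combination -h)),
    Finset.sum_insert (by simp), Finset.sum_singleton] at hsum
  omega

lemma sum_val_closedNbhd_inner (hT : IsPerfectColoring (GP n k) T !![1, 2; 2, 1])
    (h2 : 2 * (k : ZMod n) ≠ 0) (j : ZMod n) :
    (T (true, j) : ℕ) + T (true, j - k) + T (true, j + k) + T (false, j) = 2 := by
  have h1 : (k : ZMod n) ≠ 0 := fun h => h2 (by rw [h, mul_zero])
  have hsum := hT.sum_val_closedNbhd (adj_inner_iff h1 j)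
  rw [Finset.sum_insert (by simpa using fun h : j - k = j + k => h2 (by linear_combination -h)),
    Finset.sum_insert (by simp), Finset.sum_singleton] at hsum
  omega

end GP

theorem stmt_16 (n : ℕ) (hn : 7 ≤ n) (T : Bool × ZMod n → Fin 2) :
    ¬ (IsPerfectColoring (GP n 3) T !![1, 2; 2, 1] ∧
      ∃ i : ZMod n, T (false, i) = 0 ∧ T (true, i) = 0 ∧ T (false, i + 2) = 0 ∧
        T (false, i + 1) = 1 ∧ T (true, i + 1) = 1 ∧ T (true, i + 2) = 1) := by
  rintro ⟨hT, i, ha0, hb0, ha2, ha1, hb1, hb2⟩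
  have h2 : (2 : ZMod n) ≠ 0 := by
    exact_mod_cast ZMod.natCast_ne_zero_of_lt (m := 2) two_pos (by omega)
  have h6 : 2 * ((3 : ℕ) : ZMod n) ≠ 0 := by
    exact_mod_cast ZMod.natCast_ne_zero_of_lt (m := 6) (by norm_num) (by omega)
  have := GP.sum_val_closedNbhd_outer hT h2 (i + 2)
  have := GP.sum_val_closedNbhd_inner hT h6 (i + 3)
  have := GP.sum_val_closedNbhd_outer hT h2 (i + 4)
  have := GP.sum_val_closedNbhd_inner hT h6 (i + 4)
  have := GP.sum_val_closedNbhd_outer hT h2 (i + 6)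
  have := GP.sum_val_closedNbhd_outer hT h2 (i + 7)
  ring_nf at *
  omega
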